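/- Let n ≥ 2, let x₁,…,xₙ be pairwise distinct real numbers, and let h be holomorphic on an open subset of ℂ containing the segments {x_i − x_j − it : t ∈ [0, t₀]} for all i ≠ j and some t₀ > 0. Define E(β) = S_{n,1}(h, β, x) for real β ∈ [0, t₀) and set F(z) = h(z)·h(−z). Then E(0) = 0 and the derivative of E at β = 0 equals −i · ∑_{j=1}^{n} ∑_{l ≠ j} F′(x_j − x_l) ∏_{m ≠ j, l} F(x_j − x_m); in other words, lim_{β→0⁺} E(β)/β = −i · T_n(F, x), so that in the limit β → 0 the k = 1 Ruijsenaars functional equation reduces to the classical functional equation for F(x) = h(x)h(−x). -/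

import Mathlib

/-- The Ruijsenaars sum `S_{n,k}(h, β, x)`. -/
noncomputable def ruijSum (h : ℂ → ℂ) (n k : ℕ) (β : ℝ) (x : Fin n → ℝ) : ℂ :=
  ∑ I ∈ Finset.powersetCard k (Finset.univ : Finset (Fin n)),
    ((∏ i ∈ I, ∏ j ∈ Iᶜ, h ((x j : ℂ) - (x i : ℂ)) *
        h ((x i : ℂ) - (x j : ℂ) - Complex.I * (β : ℂ))) -
     (∏ i ∈ I, ∏ j ∈ Iᶜ, h ((x i : ℂ) - (x j : ℂ)) *
        h ((x j : ℂ) - (x i : ℂ) - Complex.I * (β : ℂ))))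

/-- The classical sum `T_n(F, x) = ∑_j ∑_{l ≠ j} F′(x_j − x_l) ∏_{m ≠ j,l} F(x_j − x_m)`. -/
noncomputable def classicalSum (F : ℂ → ℂ) (n : ℕ) (x : Fin n → ℝ) : ℂ :=
  ∑ j : Fin n, ∑ l ∈ Finset.univ.erase j,
    deriv F ((x j : ℂ) - (x l : ℂ)) *
      ∏ m ∈ (Finset.univ.erase j).erase l, F ((x j : ℂ) - (x m : ℂ))

/-- Complex extension of the `k = 1` Ruijsenaars sum. -/
noncomputable def ruijG (h : ℂ → ℂ) (n : ℕ) (x : Fin n → ℝ) (w : ℂ) : ℂ :=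
  ∑ i : Fin n,
    ((∏ j ∈ Finset.univ.erase i,
        h ((x j : ℂ) - (x i : ℂ)) * h ((x i : ℂ) - (x j : ℂ) - Complex.I * w)) -
     (∏ j ∈ Finset.univ.erase i,
        h ((x i : ℂ) - (x j : ℂ)) * h ((x j : ℂ) - (x i : ℂ) - Complex.I * w)))

lemma ruijSum_one_eq (h : ℂ → ℂ) (n : ℕ) (β : ℝ) (x : Fin n → ℝ) :
    ruijSum h n 1 β x = ruijG h n x (β : ℂ) := by
  unfold ruijSum ruijG
  rw [Finset.powersetCard_one, Finset.sum_map]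
  refine Finset.sum_congr rfl fun i _ => ?_
  simp [Finset.compl_singleton]

lemma ruijG_zero (h : ℂ → ℂ) (n : ℕ) (x : Fin n → ℝ) : ruijG h n x 0 = 0 := by
  unfold ruijG
  refine Finset.sum_eq_zero fun i _ => ?_
  rw [sub_eq_zero]
  refine Finset.prod_congr rfl fun j _ => ?_
  ring_nf

lemma ruijG_hasDerivAt (h : ℂ → ℂ) (n : ℕ) (x : Fin n → ℝ)
    (hdiff : ∀ i j : Fin n, i ≠ j → DifferentiableAt ℂ h ((x i : ℂ) - (x j : ℂ))) :
    HasDerivAt (ruijG h n x)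
      (-Complex.I * classicalSum (fun z => h z * h (-z)) n x) 0 := by
  classical
  -- per-index derivatives
  have hlin : ∀ i j : Fin n,
      HasDerivAt (fun w : ℂ => (x i : ℂ) - (x j : ℂ) - Complex.I * w) (-Complex.I) 0 := by
    intro i j
    simpa using (((hasDerivAt_id (0 : ℂ)).const_mul Complex.I).const_sub
      ((x i : ℂ) - (x j : ℂ)))
  have hcomp : ∀ i j : Fin n, i ≠ j →
      HasDerivAt (fun w : ℂ => h ((x i : ℂ) - (x j : ℂ) - Complex.I * w))
        (deriv h ((x i : ℂ) - (x j : ℂ)) * (-Complex.I)) 0 := by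
    intro i j hij
    have hd : HasDerivAt h (deriv h ((x i : ℂ) - (x j : ℂ)))
        ((x i : ℂ) - (x j : ℂ) - Complex.I * 0) := by
      rw [show ((x i : ℂ) - (x j : ℂ) - Complex.I * 0) = (x i : ℂ) - (x j : ℂ) by ring]
      exact (hdiff i j hij).hasDerivAt
    exact HasDerivAt.comp 0 hd (hlin i j)
  have hA : ∀ i : Fin n,
      HasDerivAt (fun w : ℂ => ∏ j ∈ Finset.univ.erase i,
          h ((x j : ℂ) - (x i : ℂ)) * h ((x i : ℂ) - (x j : ℂ) - Complex.I * w))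
        (∑ l ∈ Finset.univ.erase i,
          (∏ m ∈ (Finset.univ.erase i).erase l,
            h ((x m : ℂ) - (x i : ℂ)) * h ((x i : ℂ) - (x m : ℂ))) *
          (h ((x l : ℂ) - (x i : ℂ)) * (deriv h ((x i : ℂ) - (x l : ℂ)) * (-Complex.I)))) 0 := by
    intro i
    have := HasDerivAt.fun_finsetProd (u := Finset.univ.erase i)
      (f := fun j w => h ((x j : ℂ) - (x i : ℂ)) * h ((x i : ℂ) - (x j : ℂ) - Complex.I * w))
      (f' := fun j => h ((x j : ℂ) - (x i : ℂ)) * (deriv h ((x i : ℂ) - (x j : ℂ)) * (-Complex.I)))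
      (x := 0) (fun j hj => ((hcomp i j
        (fun e => (Finset.mem_erase.mp hj).1 e.symm)).const_mul _))
    simpa [smul_eq_mul, mul_zero, sub_zero] using this
  have hB : ∀ i : Fin n,
      HasDerivAt (fun w : ℂ => ∏ j ∈ Finset.univ.erase i,
          h ((x i : ℂ) - (x j : ℂ)) * h ((x j : ℂ) - (x i : ℂ) - Complex.I * w))
        (∑ l ∈ Finset.univ.erase i,
          (∏ m ∈ (Finset.univ.erase i).erase l,
            h ((x i : ℂ) - (x m : ℂ)) * h ((x m : ℂ) - (x i : ℂ))) *
          (h ((x i : ℂ) - (x l : ℂ)) * (deriv h ((x l : ℂ) - (x i : ℂ)) * (-Complex.I)))) 0 := by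
    intro i
    have := HasDerivAt.fun_finsetProd (u := Finset.univ.erase i)
      (f := fun j w => h ((x i : ℂ) - (x j : ℂ)) * h ((x j : ℂ) - (x i : ℂ) - Complex.I * w))
      (f' := fun j => h ((x i : ℂ) - (x j : ℂ)) * (deriv h ((x j : ℂ) - (x i : ℂ)) * (-Complex.I)))
      (x := 0) (fun j hj => ((hcomp j i (Finset.mem_erase.mp hj).1).const_mul _))
    simpa [smul_eq_mul, mul_zero, sub_zero] using this
  have hsum := HasDerivAt.fun_sum (u := (Finset.univ : Finset (Fin n)))
    (fun i _ => (hA i).sub (hB i))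
  have hderivF : ∀ i l : Fin n, i ≠ l →
      deriv (fun z => h z * h (-z)) ((x i : ℂ) - (x l : ℂ)) =
        deriv h ((x i : ℂ) - (x l : ℂ)) * h ((x l : ℂ) - (x i : ℂ)) -
        h ((x i : ℂ) - (x l : ℂ)) * deriv h ((x l : ℂ) - (x i : ℂ)) := by
    intro i l hil
    have d1 := (hdiff i l hil).hasDerivAt
    have d2 : HasDerivAt h (deriv h ((x l : ℂ) - (x i : ℂ))) (-(((x i : ℂ) - (x l : ℂ)))) := by
      rw [show (-(((x i : ℂ) - (x l : ℂ)))) = (x l : ℂ) - (x i : ℂ) by ring]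
      exact (hdiff l i hil.symm).hasDerivAt
    have dneg : HasDerivAt (fun z : ℂ => h (-z))
        (deriv h ((x l : ℂ) - (x i : ℂ)) * (-1)) ((x i : ℂ) - (x l : ℂ)) :=
      HasDerivAt.comp _ d2 (hasDerivAt_neg _)
    have := (d1.fun_mul dneg).deriv
    rw [this]; ring
  -- the computed derivative equals the target
  have hval : (∑ i : Fin n,
      ((∑ l ∈ Finset.univ.erase i,
          (∏ m ∈ (Finset.univ.erase i).erase l,
            h ((x m : ℂ) - (x i : ℂ)) * h ((x i : ℂ) - (x m : ℂ))) *
          (h ((x l : ℂ) - (x i : ℂ)) * (deriv h ((x i : ℂ) - (x l : ℂ)) * (-Complex.I)))) -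
       (∑ l ∈ Finset.univ.erase i,
          (∏ m ∈ (Finset.univ.erase i).erase l,
            h ((x i : ℂ) - (x m : ℂ)) * h ((x m : ℂ) - (x i : ℂ))) *
          (h ((x i : ℂ) - (x l : ℂ)) * (deriv h ((x l : ℂ) - (x i : ℂ)) * (-Complex.I)))))) =
      -Complex.I * classicalSum (fun z => h z * h (-z)) n x := by
    unfold classicalSum
    rw [Finset.mul_sum]
    refine Finset.sum_congr rfl fun i _ => ?_
    rw [← Finset.sum_sub_distrib, Finset.mul_sum]
    refine Finset.sum_congr rfl fun l hl => ?_
    have hli : l ≠ i := (Finset.mem_erase.mp hl).1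
    have hP1 : (∏ m ∈ (Finset.univ.erase i).erase l,
        h ((x m : ℂ) - (x i : ℂ)) * h ((x i : ℂ) - (x m : ℂ))) =
        ∏ m ∈ (Finset.univ.erase i).erase l,
          h ((x i : ℂ) - (x m : ℂ)) * h (-(((x i : ℂ) - (x m : ℂ)))) := by
      refine Finset.prod_congr rfl fun m _ => ?_
      rw [neg_sub]; ring
    have hP2 : (∏ m ∈ (Finset.univ.erase i).erase l,
        h ((x i : ℂ) - (x m : ℂ)) * h ((x m : ℂ) - (x i : ℂ))) =
        ∏ m ∈ (Finset.univ.erase i).erase l,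
          h ((x i : ℂ) - (x m : ℂ)) * h (-(((x i : ℂ) - (x m : ℂ)))) := by
      refine Finset.prod_congr rfl fun m _ => ?_
      rw [neg_sub]
    rw [hP1, hP2, hderivF i l hli.symm]
    ring
  rw [← hval]
  exact hsum

theorem ruijSum_deriv_at_zero (n : ℕ) (hn : 2 ≤ n) (x : Fin n → ℝ)
    (hx : Function.Injective x) (U : Set ℂ) (hU : IsOpen U) (h : ℂ → ℂ)
    (hh : DifferentiableOn ℂ h U) (t₀ : ℝ) (ht₀ : 0 < t₀)
    (hseg : ∀ i j : Fin n, i ≠ j → ∀ t ∈ Set.Icc (0 : ℝ) t₀,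
      ((x i : ℂ) - (x j : ℂ) - Complex.I * (t : ℂ)) ∈ U) :
    ruijSum h n 1 0 x = 0 ∧
    Filter.Tendsto (fun β : ℝ => ruijSum h n 1 β x / (β : ℂ))
      (nhdsWithin 0 (Set.Ioi 0))
      (nhds (-Complex.I * classicalSum (fun z => h z * h (-z)) n x)) := by
  have hdiff : ∀ i j : Fin n, i ≠ j → DifferentiableAt ℂ h ((x i : ℂ) - (x j : ℂ)) := by
    intro i j hij
    have hmem := hseg i j hij 0 ⟨le_refl 0, le_of_lt ht₀⟩
    have : ((x i : ℂ) - (x j : ℂ) - Complex.I * ((0 : ℝ) : ℂ)) = (x i : ℂ) - (x j : ℂ) := by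
      push_cast; ring
    rw [this] at hmem
    exact hh.differentiableAt (hU.mem_nhds hmem)
  have hG0 : ruijG h n x 0 = 0 := ruijG_zero h n x
  have hE0 : ruijSum h n 1 0 x = 0 := by
    rw [ruijSum_one_eq]; simpa using hG0
  refine ⟨hE0, ?_⟩
  have hG := ruijG_hasDerivAt h n x hdiff
  have hslope := hasDerivAt_iff_tendsto_slope.mp hG
  have hcoe : Filter.Tendsto (fun β : ℝ => (β : ℂ)) (nhdsWithin 0 (Set.Ioi 0))
      (nhdsWithin 0 {(0 : ℂ)}ᶜ) := by
    rw [tendsto_nhdsWithin_iff]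
    constructor
    · have := Complex.continuous_ofReal.tendsto 0
      simpa using this.mono_left nhdsWithin_le_nhds
    · filter_upwards [self_mem_nhdsWithin] with β hβ
      simp only [Set.mem_compl_iff, Set.mem_singleton_iff]
      exact Complex.ofReal_ne_zero.mpr (ne_of_gt hβ)
  have := hslope.comp hcoe
  refine this.congr fun β => ?_
  simp only [Function.comp]
  rw [slope_def_field, hG0, sub_zero, sub_zero, ruijSum_one_eq]
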